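/- Let Λ be an Auslander algebra (gl.dim Λ ≤ 2 and the first two terms of a minimal injective resolution of Λ are projective), and let X be a Λ-module with proj.dim X ≤ 1. Then the evaluation map X → X** is injective. -/
import Mathlib


/- STATEMENT 14: Let `Λ` be an Auslander algebra (gl.dim `Λ` ≤ 2 and the first two terms
of a minimal injective resolution of `Λ` are projective, i.e. dominant dimension ≥ 2),
and let `X` be a (finitely generated right) `Λ`-module with proj.dim `X` ≤ 1.  Then the
evaluation map `X → X**` is injective.
Right `Λ`-modules are `Λᵐᵒᵖ`-modules; `X* = X →ₗ[Λᵐᵒᵖ] Λ`, `X** = X* →ₗ[Λ] Λ`, and the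
evaluation map sends `x` to `f ↦ f x`. -/

open CategoryTheory

def GlobalDimLE2' (R : Type) [Ring R] : Prop :=
  ∀ M : ModuleCat.{0} R, ∃ (P0 P1 P2 : ModuleCat.{0} R)
    (d2 : P2 →ₗ[R] P1) (d1 : P1 →ₗ[R] P0) (d0 : P0 →ₗ[R] M),
    Module.Projective R P0 ∧ Module.Projective R P1 ∧ Module.Projective R P2 ∧
    Function.Injective d2 ∧ Function.Exact d2 d1 ∧ Function.Exact d1 d0 ∧
    Function.Surjective d0

/-- `Λ`, as a right module over itself, has an injective copresentation
`0 → Λ → E₀ → E₁` in which `E₀` and `E₁` are injective and projective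
(equivalently, the first two terms of a minimal injective resolution are projective). -/
def DominantDimGE2 (Λ : Type) [Ring Λ] : Prop :=
  ∃ (E0 E1 : ModuleCat.{0} Λᵐᵒᵖ) (u : Λ →ₗ[Λᵐᵒᵖ] E0) (d : E0 →ₗ[Λᵐᵒᵖ] E1),
    Module.Injective Λᵐᵒᵖ E0 ∧ Module.Injective Λᵐᵒᵖ E1 ∧
    Module.Projective Λᵐᵒᵖ E0 ∧ Module.Projective Λᵐᵒᵖ E1 ∧
    Function.Injective u ∧ Function.Exact u d

/-- The evaluation map `X → X**`, `x ↦ (f ↦ f x)`. -/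
def evalMap (Λ : Type) [Ring Λ] (X : Type) [AddCommGroup X] [Module Λᵐᵒᵖ X] :
    X →ₗ[Λᵐᵒᵖ] ((X →ₗ[Λᵐᵒᵖ] Λ) →ₗ[Λ] Λ) where
  toFun x :=
    { toFun := fun f => f x
      map_add' := by intro f g; simp
      map_smul' := by intro a f; simp }
  map_add' := by intro x y; ext f; simp
  map_smul' := by intro a x; ext f; simp

open MulOpposite

section Aux

variable {Λ : Type} [Ring Λ]

def unopL (Λ : Type) [Ring Λ] : Λᵐᵒᵖ →ₗ[Λᵐᵒᵖ] Λ where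
  toFun := unop
  map_add' _ _ := rfl
  map_smul' _ _ := rfl

def mulLeftL (c : Λ) : Λ →ₗ[Λᵐᵒᵖ] Λ where
  toFun z := c * z
  map_add' := by intro a b; simp [mul_add]
  map_smul' := by
    intro e z
    simp only [MulOpposite.smul_eq_mul_unop, RingHom.id_apply, mul_assoc]

theorem coord_kill {n : ℕ} (Y : Submodule Λᵐᵒᵖ (Fin n → Λᵐᵒᵖ)) (q : Fin n → Λᵐᵒᵖ)
    (hq : ∀ v : (Fin n → Λᵐᵒᵖ) →ₗ[Λᵐᵒᵖ] Λ, (∀ y ∈ Y, v y = 0) → v q = 0)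
    {M : Type} [AddCommGroup M] [Module Λᵐᵒᵖ M] (hM : Module.Projective Λᵐᵒᵖ M)
    (W : (Fin n → Λᵐᵒᵖ) →ₗ[Λᵐᵒᵖ] M) (hW : ∀ y ∈ Y, W y = 0) : W q = 0 := by
  obtain ⟨s, hs⟩ := Module.projective_def.mp hM
  have hcoord : ∀ m : M, s (W q) m = 0 := by
    intro m
    have h := hq ((unopL Λ).comp ((Finsupp.lapply m).comp (s.comp W))) ?_
    · simpa [unopL, MulOpposite.unop_eq_zero_iff] using h
    · intro y hy
      simp [unopL, hW y hy]
  have hz : s (W q) = 0 := by ext m; exact hcoord m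
  have := hs (W q)
  rw [hz] at this
  simpa using this.symm

end Aux

theorem stmt14 (K Λ : Type) [Field K] [Ring Λ] [Algebra K Λ] [FiniteDimensional K Λ]
    (hgl_right : GlobalDimLE2' Λᵐᵒᵖ) (hgl_left : GlobalDimLE2' Λ)
    (hdom : DominantDimGE2 Λ)
    (X : Type) [AddCommGroup X] [Module Λᵐᵒᵖ X] [Module.Finite Λᵐᵒᵖ X]
    (hpd : ∃ (Q0 Q1 : ModuleCat.{0} Λᵐᵒᵖ) (i : Q1 →ₗ[Λᵐᵒᵖ] Q0) (p : Q0 →ₗ[Λᵐᵒᵖ] X),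
      Module.Projective Λᵐᵒᵖ Q0 ∧ Module.Projective Λᵐᵒᵖ Q1 ∧
      Function.Injective i ∧ Function.Surjective p ∧ Function.Exact i p) :
    Function.Injective (evalMap Λ X) := by
  classical
  obtain ⟨E0, E1, u, d, hE0inj, _hE1inj, hE0proj, hE1proj, huinj, hud⟩ := hdom
  obtain ⟨Q0, Q1, i, p, hQ0, hQ1, hiinj, hpsurj, hip⟩ := hpd
  haveI := hQ0
  haveI := hQ1
  suffices key : ∀ x : X, (∀ f : X →ₗ[Λᵐᵒᵖ] Λ, f x = 0) → x = 0 by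
    intro a b hab
    have hsub : ∀ f : X →ₗ[Λᵐᵒᵖ] Λ, f (a - b) = 0 := by
      intro f
      have : evalMap Λ X a f = evalMap Λ X b f := by rw [hab]
      simp only [evalMap, LinearMap.coe_mk, AddHom.coe_mk] at this
      simp [map_sub, this]
    exact sub_eq_zero.mp (key (a - b) hsub)
  intro x hx
  obtain ⟨n, p', hp'⟩ := Module.Finite.exists_fin' Λᵐᵒᵖ X
  obtain ⟨q, hq⟩ := hp' x
  set Y : Submodule Λᵐᵒᵖ (Fin n → Λᵐᵒᵖ) := LinearMap.ker p' with hY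
  -- every functional vanishing on Y kills q
  have hqkill : ∀ v : (Fin n → Λᵐᵒᵖ) →ₗ[Λᵐᵒᵖ] Λ, (∀ y ∈ Y, v y = 0) → v q = 0 := by
    intro v hv
    have hle : Y ≤ LinearMap.ker v := fun y hy => LinearMap.mem_ker.mpr (hv y hy)
    let f0 : ((Fin n → Λᵐᵒᵖ) ⧸ Y) →ₗ[Λᵐᵒᵖ] Λ := Y.liftQ v hle
    let e := p'.quotKerEquivOfSurjective hp'
    have he : e (Submodule.Quotient.mk q) = x := hq
    have hsymm : e.symm x = Submodule.Quotient.mk q := by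
      rw [← he, LinearEquiv.symm_apply_apply]
    have h := hx (f0.comp (e.symm : X →ₗ[Λᵐᵒᵖ] ((Fin n → Λᵐᵒᵖ) ⧸ Y)))
    rw [LinearMap.comp_apply] at h
    rw [show (e.symm : X →ₗ[Λᵐᵒᵖ] _) x = e.symm x from rfl, hsymm] at h
    simpa [f0] using h
  -- Schanuel: Y is projective
  let g : ((Fin n → Λᵐᵒᵖ) × Q0) →ₗ[Λᵐᵒᵖ] X :=
    p'.comp (LinearMap.fst _ _ _) - p.comp (LinearMap.snd _ _ _)
  set Z : Submodule Λᵐᵒᵖ ((Fin n → Λᵐᵒᵖ) × Q0) := LinearMap.ker g with hZ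
  let π₁ : Z →ₗ[Λᵐᵒᵖ] (Fin n → Λᵐᵒᵖ) := (LinearMap.fst _ _ _).comp Z.subtype
  let π₂ : Z →ₗ[Λᵐᵒᵖ] Q0 := (LinearMap.snd _ _ _).comp Z.subtype
  have hmemZ : ∀ zv : (Fin n → Λᵐᵒᵖ) × Q0, (zv ∈ Z ↔ p' zv.1 = p zv.2) := by
    intro zv
    simp [hZ, g, LinearMap.mem_ker, sub_eq_zero]
  have hπ₁ : Function.Surjective π₁ := by
    intro w
    obtain ⟨b, hb⟩ := hpsurj (p' w)
    exact ⟨⟨(w, b), (hmemZ (w, b)).mpr hb.symm⟩, rfl⟩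
  have hπ₂ : Function.Surjective π₂ := by
    intro b
    obtain ⟨w, hw⟩ := hp' (p b)
    exact ⟨⟨(w, b), (hmemZ (w, b)).mpr hw⟩, rfl⟩
  obtain ⟨τ, hτ⟩ := Module.projective_lifting_property π₁ LinearMap.id hπ₁
  have hτ' : ∀ w, π₁ (τ w) = w := fun w => DFunLike.congr_fun hτ w
  have hpi0 : ∀ r : Q1, ((0 : Fin n → Λᵐᵒᵖ), i r) ∈ Z := by
    intro r
    refine (hmemZ _).mpr ?_
    rw [map_zero]
    exact (hip.apply_apply_eq_zero r).symm
  let A : Q1 →ₗ[Λᵐᵒᵖ] Z := LinearMap.codRestrict Z (LinearMap.prod 0 i) (fun r => hpi0 r)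
  let ρ : (Q1 × (Fin n → Λᵐᵒᵖ)) →ₗ[Λᵐᵒᵖ] Z :=
    A.comp (LinearMap.fst _ _ _) + τ.comp (LinearMap.snd _ _ _)
  have hρval : ∀ r w, (ρ (r, w) : (Fin n → Λᵐᵒᵖ) × Q0)
      = ((0 : Fin n → Λᵐᵒᵖ), i r) + (τ w : (Fin n → Λᵐᵒᵖ) × Q0) := fun r w => rfl
  have hρbij : Function.Bijective ρ := by
    constructor
    · intro z₁ z₂ hz
      obtain ⟨r₁, w₁⟩ := z₁
      obtain ⟨r₂, w₂⟩ := z₂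
      have hval : (ρ (r₁, w₁) : (Fin n → Λᵐᵒᵖ) × Q0) = (ρ (r₂, w₂) : (Fin n → Λᵐᵒᵖ) × Q0) := by
        rw [hz]
      rw [hρval, hρval] at hval
      have h1 : w₁ = w₂ := by
        rw [← hτ' w₁, ← hτ' w₂]
        show (τ w₁ : (Fin n → Λᵐᵒᵖ) × Q0).1 = (τ w₂ : (Fin n → Λᵐᵒᵖ) × Q0).1
        have h := congrArg Prod.fst hval
        simpa using h
      subst h1
      have h2 : i r₁ = i r₂ := by
        have h := congrArg Prod.snd hval
        simpa using h
      rw [hiinj h2]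
    · intro z
      obtain ⟨zv, hzv⟩ := z
      set z' := (⟨zv, hzv⟩ : Z) - τ (π₁ ⟨zv, hzv⟩) with hz'
      have hz'1 : (z' : (Fin n → Λᵐᵒᵖ) × Q0).1 = 0 := by
        show π₁ z' = 0
        rw [hz', map_sub, hτ']
        simp
      have hz'mem : p' (z' : (Fin n → Λᵐᵒᵖ) × Q0).1 = p (z' : (Fin n → Λᵐᵒᵖ) × Q0).2 :=
        (hmemZ _).mp z'.2
      have hpz : p (z' : (Fin n → Λᵐᵒᵖ) × Q0).2 = 0 := by
        rw [← hz'mem, hz'1, map_zero]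
      obtain ⟨r, hr⟩ := (hip _).mp hpz
      refine ⟨(r, π₁ ⟨zv, hzv⟩), ?_⟩
      apply Subtype.ext
      rw [hρval]
      have hτz : (τ (π₁ ⟨zv, hzv⟩) : (Fin n → Λᵐᵒᵖ) × Q0) = zv - (z' : (Fin n → Λᵐᵒᵖ) × Q0) := by
        rw [hz']
        simp
      rw [hτz]
      have hz'eq : (z' : (Fin n → Λᵐᵒᵖ) × Q0) = (0, (z' : (Fin n → Λᵐᵒᵖ) × Q0).2) := by
        rw [← Prod.mk.eta (p := (z' : (Fin n → Λᵐᵒᵖ) × Q0)), hz'1]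
      rw [hz'eq, hr]
      ext <;> simp
  have hZproj : Module.Projective Λᵐᵒᵖ Z :=
    Module.Projective.of_equiv (LinearEquiv.ofBijective ρ hρbij)
  haveI := hZproj
  obtain ⟨σ, hσ⟩ := Module.projective_lifting_property π₂ LinearMap.id hπ₂
  have hσ' : ∀ b, π₂ (σ b) = b := fun b => DFunLike.congr_fun hσ b
  have hκmem : ∀ y : Y, ((y : Fin n → Λᵐᵒᵖ), (0 : Q0)) ∈ Z := by
    intro y
    refine (hmemZ _).mpr ?_
    rw [map_zero]
    exact y.2
  let κ : Y →ₗ[Λᵐᵒᵖ] Z := LinearMap.codRestrict Z (LinearMap.prod Y.subtype 0) (fun y => hκmem y)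
  have hretmem : ∀ z : Z, π₁ (z - σ (π₂ z)) ∈ Y := by
    intro z
    have h2 : π₂ (z - σ (π₂ z)) = 0 := by rw [map_sub, hσ', sub_self]
    have hmem : p' ((((z - σ (π₂ z)) : Z) : (Fin n → Λᵐᵒᵖ) × Q0)).1
        = p ((((z - σ (π₂ z)) : Z) : (Fin n → Λᵐᵒᵖ) × Q0)).2 := (hmemZ _).mp (z - σ (π₂ z)).2
    rw [hY, LinearMap.mem_ker]
    show p' ((((z - σ (π₂ z)) : Z) : (Fin n → Λᵐᵒᵖ) × Q0)).1 = 0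
    rw [hmem, show ((((z - σ (π₂ z)) : Z) : (Fin n → Λᵐᵒᵖ) × Q0)).2 = π₂ (z - σ (π₂ z)) from rfl,
      h2, map_zero]
  let ret : Z →ₗ[Λᵐᵒᵖ] Y :=
    LinearMap.codRestrict Y (π₁.comp (LinearMap.id - σ.comp π₂)) (fun z => by
      simp only [LinearMap.comp_apply, LinearMap.sub_apply, LinearMap.id_apply]
      exact hretmem z)
  have hretκ : ∀ y : Y, ret (κ y) = y := by
    intro y
    apply Subtype.ext
    have hκ2 : π₂ (κ y) = 0 := rfl
    show (π₁.comp (LinearMap.id - σ.comp π₂)) (κ y) = (y : Fin n → Λᵐᵒᵖ)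
    simp only [LinearMap.comp_apply, LinearMap.sub_apply, LinearMap.id_apply, hκ2, map_zero,
      sub_zero]
    rfl
  have hYproj : Module.Projective Λᵐᵒᵖ Y :=
    Module.Projective.of_split κ ret (LinearMap.ext fun y => hretκ y)
  -- Y is finitely generated
  haveI : Module.Finite K Λᵐᵒᵖ := Module.Finite.equiv (MulOpposite.opLinearEquiv K)
  haveI hNoethK : IsNoetherian K Λᵐᵒᵖ := inferInstance
  haveI : IsNoetherianRing Λᵐᵒᵖ := isNoetherianRing_iff.mpr (isNoetherian_of_tower K hNoethK)
  haveI : Module.Finite Λᵐᵒᵖ Y := Module.Finite.iff_fg.mpr (IsNoetherian.noetherian Y)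
  haveI := hYproj
  obtain ⟨m, ρ₂, hρ₂⟩ := Module.Finite.exists_fin' Λᵐᵒᵖ Y
  obtain ⟨s₂, hs₂⟩ := Module.projective_lifting_property ρ₂ LinearMap.id hρ₂
  have hs₂' : ∀ y, ρ₂ (s₂ y) = y := fun y => DFunLike.congr_fun hs₂ y
  -- dual basis
  let eb : Fin m → Y := fun k => ρ₂ (Pi.single k (1 : Λᵐᵒᵖ))
  let gL : Fin m → (Y →ₗ[Λᵐᵒᵖ] Λ) := fun k => (unopL Λ).comp ((LinearMap.proj k).comp s₂)
  have hgL : ∀ k y, gL k y = unop (s₂ y k) := fun k y => rfl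
  have hdb : ∀ y : Y, (∑ k, (s₂ y k) • eb k) = y := by
    intro y
    calc ∑ k, (s₂ y k) • eb k
        = ∑ k, ρ₂ ((s₂ y k) • (Pi.single k (1 : Λᵐᵒᵖ) : Fin m → Λᵐᵒᵖ)) := by
          refine Finset.sum_congr rfl (fun k _ => ?_)
          rw [map_smul]
      _ = ρ₂ (∑ k, (s₂ y k) • (Pi.single k (1 : Λᵐᵒᵖ) : Fin m → Λᵐᵒᵖ)) := (map_sum ρ₂ _ _).symm
      _ = ρ₂ (∑ k, (Pi.single k (s₂ y k) : Fin m → Λᵐᵒᵖ)) := by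
          congr 1
          refine Finset.sum_congr rfl (fun k _ => ?_)
          rw [← Pi.single_smul, smul_eq_mul, mul_one]
      _ = ρ₂ (s₂ y) := by rw [Finset.univ_sum_single]
      _ = y := hs₂' y
  -- extend the dual basis functionals to maps (Fin n → Λᵐᵒᵖ) → E0
  have hext : ∀ k, ∃ G : (Fin n → Λᵐᵒᵖ) →ₗ[Λᵐᵒᵖ] E0, ∀ y : Y, G y = u (gL k y) := by
    intro k
    obtain ⟨h, hh⟩ := hE0inj.out Y.subtype (Submodule.injective_subtype Y) (u.comp (gL k))
    exact ⟨h, fun y => hh y⟩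
  choose G hG using hext
  have hdG : ∀ k, d (G k q) = 0 := by
    intro k
    refine coord_kill Y q hqkill hE1proj (d.comp (G k)) ?_
    intro y hy
    show d (G k y) = 0
    rw [show y = ((⟨y, hy⟩ : Y) : Fin n → Λᵐᵒᵖ) from rfl, hG k ⟨y, hy⟩]
    exact hud.apply_apply_eq_zero _
  have hcex : ∀ k, ∃ c : Λ, u c = G k q := fun k => (hud (G k q)).mp (hdG k)
  choose c hc using hcex
  let a' : Y := ∑ k, (op (c k)) • eb k
  have hvq : ∀ v : (Fin n → Λᵐᵒᵖ) →ₗ[Λᵐᵒᵖ] Λ, v q = v (a' : Fin n → Λᵐᵒᵖ) := by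
    intro v
    let vY : Y →ₗ[Λᵐᵒᵖ] Λ := v.comp Y.subtype
    have hLk : ∀ k, ∃ L : E0 →ₗ[Λᵐᵒᵖ] E0, ∀ z : Λ, L (u z) = u (vY (eb k) * z) := by
      intro k
      obtain ⟨h, hh⟩ := hE0inj.out u huinj (u.comp (mulLeftL (vY (eb k))))
      exact ⟨h, fun z => hh z⟩
    choose L hL using hLk
    set W : (Fin n → Λᵐᵒᵖ) →ₗ[Λᵐᵒᵖ] E0 := u.comp v - ∑ k, (L k).comp (G k) with hWdef
    have hWapp : ∀ w, W w = u (v w) - ∑ k, L k (G k w) := by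
      intro w
      rw [hWdef]
      simp [LinearMap.sub_apply, LinearMap.sum_apply]
    have hWY : ∀ y ∈ Y, W y = 0 := by
      intro y hy
      rw [hWapp]
      have hsum : ∑ k, L k (G k y) = ∑ k, u (vY (eb k) * gL k ⟨y, hy⟩) := by
        refine Finset.sum_congr rfl (fun k _ => ?_)
        rw [show G k y = u (gL k ⟨y, hy⟩) from hG k ⟨y, hy⟩, hL k]
      have h2 : v y = ∑ k, vY (eb k) * gL k ⟨y, hy⟩ := by
        calc v y = vY ⟨y, hy⟩ := rfl
          _ = vY (∑ k, (s₂ ⟨y, hy⟩ k) • eb k) := by rw [hdb ⟨y, hy⟩]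
          _ = ∑ k, vY ((s₂ ⟨y, hy⟩ k) • eb k) := map_sum vY _ _
          _ = ∑ k, vY (eb k) * gL k ⟨y, hy⟩ := by
              refine Finset.sum_congr rfl (fun k _ => ?_)
              rw [map_smul, MulOpposite.smul_eq_mul_unop, hgL]
      rw [hsum, h2, ← map_sum, sub_self]
    have hWq := coord_kill Y q hqkill hE0proj W hWY
    rw [hWapp] at hWq
    have h3 : u (v q) = ∑ k, L k (G k q) := sub_eq_zero.mp hWq
    have h4 : ∑ k, L k (G k q) = u (∑ k, vY (eb k) * c k) := by
      rw [map_sum]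
      refine Finset.sum_congr rfl (fun k _ => ?_)
      rw [← hc k, hL k]
    have h5 : v (a' : Fin n → Λᵐᵒᵖ) = ∑ k, vY (eb k) * c k := by
      calc v (a' : Fin n → Λᵐᵒᵖ) = vY (∑ k, (op (c k)) • eb k) := rfl
        _ = ∑ k, vY ((op (c k)) • eb k) := map_sum vY _ _
        _ = ∑ k, vY (eb k) * c k := by
            refine Finset.sum_congr rfl (fun k _ => ?_)
            rw [map_smul, MulOpposite.smul_eq_mul_unop, unop_op]
    apply huinj
    rw [h3, h4, ← h5]
  have hqa : q = (a' : Fin n → Λᵐᵒᵖ) := by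
    funext j
    have h := hvq ((unopL Λ).comp (LinearMap.proj j))
    simp only [LinearMap.comp_apply, LinearMap.proj_apply] at h
    exact unop_injective h
  rw [← hq, hqa]
  exact LinearMap.mem_ker.mp a'.2
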